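/- arXiv:2405.12587 — 2 statements merged into one kernel-verified Lean document; each statement's English description precedes it below -/
import Mathlib

section
/- Fix integers d₁, d₂ ≥ 0 with d = d₁ + d₂, and identify a splitting of a full flag of length d in a d-dimensional space into two full flags of dimensions d₁ and d₂ with a subset I ⊆ {1,…,d} of size d₁, where the k-th step of the first flag jumps exactly when k ∈ I. For such I define v₁ᵏ := #(I ∩ {1,…,k-1}) and v₂ᵏ := (k-1) - v₁ᵏ for 1 ≤ k ≤ d+1, and set ext⁺(I) := Σ_{k=1}^{d} v₁ᵏ·v₂^{k+1} and ext⁻(I) := Σ_{k=1}^{d} v₂ᵏ·v₁^{k+1}. Then as I ranges over all d₁-element subsets of {1,…,d}, the set of values ext⁺(I) - ext⁻(I) is exactly {-d₁d₂, -d₁d₂+2, …, d₁d₂-2, d₁d₂}, i.e. all integers of absolute value at most d₁d₂ that are congruent to d₁d₂ mod 2. -/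
/-- v₁ᵏ = #(I ∩ {1,…,k-1}): dimension of the k-th step of the first flag. -/
def v1 (I : Finset ℕ) (k : ℕ) : ℤ := ((I.filter fun i => i < k).card : ℤ)

/-- v₂ᵏ = (k-1) - v₁ᵏ: dimension of the k-th step of the second flag. -/
def v2 (I : Finset ℕ) (k : ℕ) : ℤ := (k : ℤ) - 1 - v1 I k

/-- ext⁺(I) = Σ_{k=1}^{d} v₁ᵏ·v₂^{k+1}  (= dim Ext_Q(V₁•,V₂•) up to common terms). -/
def extP (d : ℕ) (I : Finset ℕ) : ℤ := ∑ k ∈ Finset.Icc 1 d, v1 I k * v2 I (k + 1)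

/-- ext⁻(I) = Σ_{k=1}^{d} v₂ᵏ·v₁^{k+1}  (= dim Ext_Q(V₂•,V₁•) up to common terms). -/
def extM (d : ℕ) (I : Finset ℕ) : ℤ := ∑ k ∈ Finset.Icc 1 d, v2 I k * v1 I (k + 1)


/-! The quadratic terms cancel in each summand of `extP d I - extM d I`, leaving a sum that is
linear in the indicator of `I`: a jump at step `i` contributes `d + 1 - 2 i`. Hence
`extP - extM = #I (d + 1) - 2 ∑ I`, and the claim becomes the classical fact that the sums of
the `d₁`-subsets of `{1, …, d₁ + d₂}` fill the interval from `1 + ⋯ + d₁` to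
`(d₂ + 1) + ⋯ + (d₂ + d₁)`. The upper end follows from the lower one through the reflection
`i ↦ d + 1 - i`, and every value in between is reached by induction on `d₁`, adding the new
element on top. -/

open Finset

theorem v1_eq_sum_ite (I : Finset ℕ) (k : ℕ) :
    v1 I k = ∑ i ∈ I, if i < k then (1 : ℤ) else 0 := by
  rw [v1, card_filter]
  push_cast
  rfl

theorem sum_Icc_jump_term {d i : ℕ} (hi : 1 ≤ i) (hid : i ≤ d) :
    ∑ k ∈ Icc 1 d,
        ((k : ℤ) * (if i < k then 1 else 0) - ((k : ℤ) - 1) * (if i < k + 1 then 1 else 0))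
      = (d : ℤ) + 1 - 2 * i := by
  induction d, hid using Nat.le_induction with
  | base =>
    rw [sum_eq_single_of_mem i (mem_Icc.mpr ⟨hi, le_rfl⟩)]
    · simp only [lt_irrefl, if_false, lt_add_one, if_true]
      ring
    · intro k hk hki
      have := mem_Icc.mp hk
      rw [if_neg (by omega), if_neg (by omega)]
      ring
  | succ d _ ih =>
    rw [sum_Icc_succ_top (by omega), ih, if_pos (by omega), if_pos (by omega)]
    push_cast
    ring

theorem extP_sub_extM {d : ℕ} {I : Finset ℕ} (hI : I ⊆ Icc 1 d) :
    extP d I - extM d I = #I * ((d : ℤ) + 1) - 2 * ((∑ i ∈ I, i : ℕ) : ℤ) := by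
  have cancel : ∀ k : ℕ, v1 I k * v2 I (k + 1) - v2 I k * v1 I (k + 1)
      = k * v1 I k - (k - 1) * v1 I (k + 1) := by
    intro k
    simp only [v2]
    push_cast
    ring
  calc extP d I - extM d I
      = ∑ k ∈ Icc 1 d, ∑ i ∈ I, ((k : ℤ) * (if i < k then 1 else 0)
          - ((k : ℤ) - 1) * (if i < k + 1 then 1 else 0)) := by
        rw [extP, extM, ← sum_sub_distrib]
        refine sum_congr rfl fun k _ => ?_
        rw [cancel, v1_eq_sum_ite, v1_eq_sum_ite, mul_sum, mul_sum, sum_sub_distrib]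
    _ = ∑ i ∈ I, ((d : ℤ) + 1 - 2 * i) := by
        rw [sum_comm]
        refine sum_congr rfl fun i hi => ?_
        have := mem_Icc.mp (hI hi)
        exact sum_Icc_jump_term this.1 this.2
    _ = #I * ((d : ℤ) + 1) - 2 * ((∑ i ∈ I, i : ℕ) : ℤ) := by
        rw [sum_sub_distrib, sum_const, nsmul_eq_mul, ← mul_sum]
        push_cast
        rfl

theorem card_mul_card_add_one_le_two_mul_sum (s : Finset ℕ) (hs : ∀ i ∈ s, 0 < i) :
    #s * (#s + 1) ≤ 2 * ∑ i ∈ s, i := by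
  induction s using Finset.induction_on_max with
  | empty => simp
  | insert a s ha ih =>
    have has : a ∉ s := fun h => lt_irrefl a (ha a h)
    have hcard : #s + 1 ≤ a := by
      have : s ⊆ Ioo 0 a := fun i hi => mem_Ioo.mpr ⟨hs i (mem_insert_of_mem hi), ha i hi⟩
      have := card_le_card this
      rw [Nat.card_Ioo] at this
      have := hs a (mem_insert_self a s)
      omega
    rw [card_insert_of_notMem has, sum_insert has]
    have := ih fun i hi => hs i (mem_insert_of_mem hi)
    nlinarith

theorem two_mul_sum_le_of_subset_Icc {d : ℕ} {I : Finset ℕ} (hI : I ⊆ Icc 1 d) :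
    2 * ∑ i ∈ I, i + #I * (#I + 1) ≤ 2 * #I * (d + 1) := by
  have hinj : Set.InjOn (d + 1 - ·) I := fun i hi j hj hij => by
    have := mem_Icc.mp (hI hi)
    have := mem_Icc.mp (hI hj)
    simp only at hij
    omega
  set J := I.image (d + 1 - ·)
  have hcard : #J = #I := card_image_of_injOn hinj
  have hsum : ∑ i ∈ I, i + ∑ j ∈ J, j = #I * (d + 1) := by
    rw [sum_image hinj, ← sum_add_distrib, ← smul_eq_mul, ← sum_const]
    refine sum_congr rfl fun i hi => ?_
    have := mem_Icc.mp (hI hi)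
    omega
  have hpos : ∀ j ∈ J, 0 < j := by
    simp only [J, mem_image]
    rintro _ ⟨i, hi, rfl⟩
    have := mem_Icc.mp (hI hi)
    omega
  have hJ := card_mul_card_add_one_le_two_mul_sum J hpos
  rw [hcard] at hJ
  nlinarith

theorem exists_subset_Icc_card_sum (d1 d2 t : ℕ) (ht : t ≤ d1 * d2) :
    ∃ I ⊆ Icc 1 (d1 + d2), #I = d1 ∧ 2 * ∑ i ∈ I, i = d1 * (d1 + 1) + 2 * t := by
  induction d1 generalizing d2 t with
  | zero => exact ⟨∅, empty_subset _, rfl, by simp_all⟩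
  | succ d1 ih =>
    -- put the new element `d1 + 1 + (t - t')` on top of a set for the parameters `d2', t'`
    suffices ∃ d2' t', t' ≤ d1 * d2' ∧ d2' + t' ≤ t ∧ t ≤ d2 + t' by
      obtain ⟨d2', t', ht', hlo, hhi⟩ := this
      obtain ⟨J, hJ, hcard, hsum⟩ := ih d2' t' ht'
      have hnotMem : d1 + 1 + (t - t') ∉ J := fun h => by
        have := mem_Icc.mp (hJ h)
        omega
      refine ⟨insert (d1 + 1 + (t - t')) J, insert_subset (mem_Icc.mpr ⟨by omega, by omega⟩)
        (hJ.trans (Icc_subset_Icc_right (by omega))), by rw [card_insert_of_notMem hnotMem, hcard],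
        ?_⟩
      rw [sum_insert hnotMem, mul_add, hsum]
      zify [show t' ≤ t by omega]
      ring
    rcases le_or_gt d2 t with h | h
    · exact ⟨d2, t - d2, by rw [Nat.succ_mul] at ht; omega, by omega, by omega⟩
    · exact ⟨0, 0, le_rfl, by omega, by omega⟩

/-- As I ranges over d₁-element subsets of {1,…,d} (d = d₁+d₂), the values
ext⁺(I) - ext⁻(I) are exactly the integers m with |m| ≤ d₁d₂ and m ≡ d₁d₂ (mod 2). -/
theorem extDiff_range (d1 d2 : ℕ) :
    {m : ℤ | ∃ I : Finset ℕ, I ⊆ Finset.Icc 1 (d1 + d2) ∧ I.card = d1 ∧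
        extP (d1 + d2) I - extM (d1 + d2) I = m}
      = {m : ℤ | m.natAbs ≤ d1 * d2 ∧ m ≡ (d1 * d2 : ℤ) [ZMOD 2]} := by
  ext m
  constructor
  · rintro ⟨I, hI, rfl, rfl⟩
    rw [extP_sub_extM hI]
    have hlow := card_mul_card_add_one_le_two_mul_sum I fun i hi => (mem_Icc.mp (hI hi)).1
    have hupp := two_mul_sum_le_of_subset_Icc hI
    zify at hlow hupp
    constructor
    · rw [← Int.ofNat_le, Int.natCast_natAbs, abs_le]
      push_cast
      constructor <;> linarith
    · obtain ⟨k, hk⟩ := Int.even_mul_succ_self #I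
      rw [Int.modEq_iff_dvd]
      exact ⟨(∑ i ∈ I, i : ℕ) - k, by push_cast; linarith⟩
  · rintro ⟨habs, hmod⟩
    rw [Int.ModEq, ← Nat.cast_mul] at hmod
    obtain ⟨t, ht, rfl⟩ : ∃ t : ℕ, t ≤ d1 * d2 ∧ m = (d1 * d2 : ℕ) - 2 * t :=
      ⟨(((d1 * d2 : ℕ) - m) / 2).toNat, by omega, by omega⟩
    obtain ⟨I, hI, hcard, hsum⟩ := exists_subset_Icc_card_sum d1 d2 t ht
    refine ⟨I, hI, hcard, ?_⟩
    rw [extP_sub_extM hI, hcard]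
    zify at hsum
    push_cast
    linarith
end

section
/- Localized toric blow-up identity for the χ_{-y} genus: for pairwise 'generic' nonzero complex numbers x₁,…,x_{N+1} (all ratios xⱼ/xᵢ ≠ 1 and ≠ y^{±1} as needed) and y a nontrivial N-th root of unity, ∏_{i=1}^{N+1} (1 - y/xᵢ)/(1 - 1/xᵢ) = Σ_{i=1}^{N+1} (1 - y/xᵢ)/(1 - 1/xᵢ) · ∏_{j≠i} (1 - y xᵢ/xⱼ)/(1 - xᵢ/xⱼ). (This is the q = 0 specialization of the theta-function blow-up identity for elliptic genus.) -/
/-! The rational function `t ↦ ∏ⱼ (y t - xⱼ) / (t - xⱼ)` has value `y ^ (N + 1) = y` at infinity and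
a simple pole at each `xᵢ` with residue `(y - 1) xᵢ Pᵢ`, where `Pᵢ = ∏_{j ≠ i} (y xᵢ - xⱼ) / (xᵢ - xⱼ)`;
its partial fraction expansion follows from Lagrange interpolation of the numerator. Evaluating
the expansion at `t = 0` gives `∑ᵢ Pᵢ = 1`, and evaluating it at `t = 1` gives the identity. -/

open Polynomial Finset

theorem Polynomial.degree_prod_sub_prod_lt {R ι : Type*} [CommRing R] {s : Finset ι}
    {f g : ι → R[X]} (hf : ∀ i ∈ s, (f i).natDegree ≤ 1) (hg : ∀ i ∈ s, (g i).natDegree ≤ 1)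
    (hfg : ∀ i ∈ s, (f i).coeff 1 = (g i).coeff 1) :
    (∏ i ∈ s, f i - ∏ i ∈ s, g i).degree < #s := by
  have natDegree_prod_le_card {h : ι → R[X]} (hh : ∀ i ∈ s, (h i).natDegree ≤ 1) :
      (∏ i ∈ s, h i).natDegree ≤ #s :=
    (natDegree_prod_le s h).trans <| by simpa using sum_le_sum hh
  rw [degree_lt_iff_coeff_zero]
  intro m hm
  rw [coeff_sub, sub_eq_zero]
  rcases hm.eq_or_lt with rfl | hlt
  · simpa using (coeff_prod_of_natDegree_le s f 1 hf).trans
      ((prod_congr rfl hfg).trans (coeff_prod_of_natDegree_le s g 1 hg).symm)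
  · rw [coeff_eq_zero_of_natDegree_lt ((natDegree_prod_le_card hf).trans_lt hlt),
      coeff_eq_zero_of_natDegree_lt ((natDegree_prod_le_card hg).trans_lt hlt)]

namespace Lagrange

variable {F ι : Type*} [Field F] [DecidableEq ι] {s : Finset ι} {v : ι → F}

theorem eval_div_eval_nodal_eq_sum {f : F[X]} (hvs : Set.InjOn v s) (hf : f.degree < #s) {t : F}
    (ht : ∀ i ∈ s, t ≠ v i) :
    f.eval t / (nodal s v).eval t = ∑ i ∈ s, nodalWeight s v i * (t - v i)⁻¹ * f.eval (v i) := by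
  conv_lhs => rw [eq_interpolate hvs hf, eval_interpolate_not_at_node _ ht]
  exact mul_div_cancel_left₀ _ (eval_nodal_not_at_node ht)

theorem prod_div_eq_pow_add_sum (hvs : Set.InjOn v s) (y : F) {t : F} (ht : ∀ i ∈ s, t ≠ v i) :
    ∏ j ∈ s, (y * t - v j) / (t - v j) = y ^ #s +
      ∑ i ∈ s, (y - 1) * v i / (t - v i) * ∏ j ∈ s.erase i, (y * v i - v j) / (v i - v j) := by
  set f : F[X] := ∏ j ∈ s, (C y * X - C (v j)) - ∏ j ∈ s, C y * (X - C (v j))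
  have hf : f.degree < #s :=
    degree_prod_sub_prod_lt (fun _ _ => by compute_degree) (fun _ _ => by compute_degree)
      (fun _ _ => by simp)
  have hf_eval (u : F) : f.eval u = ∏ j ∈ s, (y * u - v j) - y ^ #s * (nodal s v).eval u := by
    simp [f, eval_prod, prod_mul_distrib, eval_nodal]
  have hnodal : (nodal s v).eval t ≠ 0 := eval_nodal_not_at_node ht
  have key := eval_div_eval_nodal_eq_sum hvs hf ht
  rw [hf_eval, sub_div, mul_div_cancel_right₀ _ hnodal, eval_nodal, ← prod_div_distrib,
    sub_eq_iff_eq_add'] at key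
  rw [key]
  congr 1
  refine sum_congr rfl fun i hi => ?_
  rw [hf_eval, eval_nodal_at_node hi, mul_zero, sub_zero, ← mul_prod_erase s _ hi, nodalWeight,
    prod_div_distrib, div_eq_mul_inv _ (∏ j ∈ s.erase i, _), prod_inv_distrib]
  ring

theorem sum_prod_div_eq_one (hvs : Set.InjOn v s) (hv0 : ∀ i ∈ s, v i ≠ 0) {y : F}
    (hy : y ^ #s = y) (hy1 : y ≠ 1) :
    ∑ i ∈ s, ∏ j ∈ s.erase i, (y * v i - v j) / (v i - v j) = 1 := by
  have h0 := prod_div_eq_pow_add_sum hvs y fun i hi => (hv0 i hi).symm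
  have hlhs : ∏ j ∈ s, (y * 0 - v j) / (0 - v j) = 1 :=
    prod_eq_one fun j hj => by simp [hv0 j hj]
  have hterm : ∀ i ∈ s, (y - 1) * v i / (0 - v i) = -(y - 1) := fun i hi => by
    rw [zero_sub, div_neg, mul_div_assoc, div_self (hv0 i hi), mul_one]
  rw [hlhs, hy, sum_congr rfl fun i hi => by rw [hterm i hi], ← mul_sum] at h0
  apply mul_left_cancel₀ (sub_ne_zero.mpr hy1)
  linear_combination h0

theorem prod_div_one_sub_eq_sum (hvs : Set.InjOn v s) (hv0 : ∀ i ∈ s, v i ≠ 0)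
    (hv1 : ∀ i ∈ s, v i ≠ 1) {y : F} (hy : y ^ #s = y) (hy1 : y ≠ 1) :
    ∏ j ∈ s, (y - v j) / (1 - v j) =
      ∑ i ∈ s, (y - v i) / (1 - v i) * ∏ j ∈ s.erase i, (y * v i - v j) / (v i - v j) := by
  have h1 := prod_div_eq_pow_add_sum hvs y fun i hi => (hv1 i hi).symm
  simp only [mul_one, hy] at h1
  have hterm : ∀ i ∈ s, (y - v i) / (1 - v i) = (y - 1) * v i / (1 - v i) + y := fun i hi => by
    field_simp [sub_ne_zero.mpr (hv1 i hi).symm]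
    ring
  have hsum : ∑ i ∈ s, (y - v i) / (1 - v i) * ∏ j ∈ s.erase i, (y * v i - v j) / (v i - v j) =
      ∑ i ∈ s, (y - 1) * v i / (1 - v i) * ∏ j ∈ s.erase i, (y * v i - v j) / (v i - v j) +
        y * ∑ i ∈ s, ∏ j ∈ s.erase i, (y * v i - v j) / (v i - v j) := by
    rw [mul_sum, ← sum_add_distrib]
    exact sum_congr rfl fun i hi => by rw [hterm i hi, add_mul]
  rw [h1, hsum, sum_prod_div_eq_one hvs hv0 hy hy1, mul_one, add_comm]

end Lagrange

theorem one_sub_div_div_one_sub_div {K : Type*} [Field K] {a : K} (b c : K) (ha : a ≠ 0) :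
    (1 - b / a) / (1 - c / a) = (b - a) / (c - a) := by
  rw [one_sub_div ha, one_sub_div ha, div_div_div_cancel_right₀ ha, ← neg_sub b, ← neg_sub c,
    neg_div_neg_eq]

theorem blowup_identity_chi_y_general (N : ℕ) (y : ℂ)
    (hyN : y ^ N = 1) (hy1 : y ≠ 1)
    (x : Fin (N + 1) → ℂ) (hx0 : ∀ i, x i ≠ 0) (hx1 : ∀ i, x i ≠ 1)
    (hxd : ∀ i j, i ≠ j → x i ≠ x j) :
    (∏ i, (1 - y / x i) / (1 - 1 / x i))
      = ∑ i, (1 - y / x i) / (1 - 1 / x i) *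
          ∏ j ∈ Finset.univ.erase i, (1 - y * x i / x j) / (1 - x i / x j) := by
  have hy : y ^ #(univ : Finset (Fin (N + 1))) = y := by
    rw [card_univ, Fintype.card_fin, pow_succ, hyN, one_mul]
  simp_rw [one_sub_div_div_one_sub_div _ _ (hx0 _)]
  exact Lagrange.prod_div_one_sub_eq_sum (fun i _ j _ => not_imp_not.mp (hxd i j))
    (fun i _ => hx0 i) (fun i _ => hx1 i) hy hy1

/-- Localized toric blow-up identity for the χ_{-y} genus: for generic nonzero
x₁,…,x_{N+1} and y a nontrivial N-th root of unity,
∏ᵢ (1 - y/xᵢ)/(1 - 1/xᵢ) = Σᵢ (1 - y/xᵢ)/(1 - 1/xᵢ)·∏_{j≠i}(1 - y xᵢ/xⱼ)/(1 - xᵢ/xⱼ). -/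
theorem blowup_identity_chi_y (N : ℕ) (hN : 1 ≤ N) (y : ℂ)
    (hyN : y ^ N = 1) (hy1 : y ≠ 1)
    (x : Fin (N + 1) → ℂ) (hx0 : ∀ i, x i ≠ 0) (hx1 : ∀ i, x i ≠ 1)
    (hxd : ∀ i j, i ≠ j → x i ≠ x j) :
    (∏ i, (1 - y / x i) / (1 - 1 / x i))
      = ∑ i, (1 - y / x i) / (1 - 1 / x i) *
          ∏ j ∈ Finset.univ.erase i, (1 - y * x i / x j) / (1 - x i / x j) :=
  blowup_identity_chi_y_general N y hyN hy1 x hx0 hx1 hxd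
end
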